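/- There exists a real-valued random variable X with P(X < 0) > 0 such that f(n) = E[X^n e^{-X}]/n! is a valid probability mass function on ℕ₀. (For example X ~ N(μ,σ²) with μ ≥ σ² > 0.) Hence nonnegativity of the mixing distribution is not a necessary condition for existence of a mixed Poisson distribution. -/

import Mathlib

open MeasureTheory Real

lemma integrable_dirac' {f : ℝ → ℝ} (_hf : Continuous f) (a : ℝ) :
    Integrable f (Measure.dirac a) := by
  refine (integrable_const (f a)).congr ?_
  rw [ae_dirac_eq]
  exact Filter.eventuallyEq_iff_exists_mem.mpr ⟨{a}, by simp, fun x hx => by simp at hx; simp [hx]⟩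

lemma tsum_pow_div_factorial (x : ℝ) : ∑' n : ℕ, x ^ n / n.factorial = Real.exp x := by
  rw [Real.exp_eq_exp_ℝ, NormedSpace.exp_eq_tsum_div]

/-- Nonnegativity of the mixing distribution is not necessary: there exists a
probability distribution `μ` on `ℝ` putting positive mass on the negatives such that
`f(n) = E[X^n e^{-X}]/n!` is a valid probability mass function on `ℕ`
(e.g. `X ~ N(m, σ²)` with `m ≥ σ² > 0`). -/
theorem mixed_poisson_neg_support_exists :
    ∃ μ : Measure ℝ, IsProbabilityMeasure μ ∧
      0 < μ {x | x < 0} ∧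
      (∀ n : ℕ, Integrable (fun x : ℝ => x ^ n * Real.exp (-x)) μ) ∧
      (∀ n : ℕ, 0 ≤ (∫ x, x ^ n * Real.exp (-x) ∂μ) / n.factorial) ∧
      ∑' n : ℕ, (∫ x, x ^ n * Real.exp (-x) ∂μ) / n.factorial = 1 := by
  set μ : Measure ℝ := (1/100 : ENNReal) • Measure.dirac (-1) + (99/100 : ENNReal) • Measure.dirac 2 with hμ
  have hcont : ∀ n : ℕ, Continuous (fun x : ℝ => x ^ n * Real.exp (-x)) := by
    intro n; continuity
  have hint : ∀ n : ℕ, Integrable (fun x : ℝ => x ^ n * Real.exp (-x)) μ := by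
    intro n
    refine Integrable.add_measure ?_ ?_
    · exact (integrable_dirac' (hcont n) (-1)).smul_measure ((ENNReal.div_lt_top (by norm_num) (by norm_num)).ne)
    · exact (integrable_dirac' (hcont n) 2).smul_measure ((ENNReal.div_lt_top (by norm_num) (by norm_num)).ne)
  have hival : ∀ n : ℕ, (∫ x, x ^ n * Real.exp (-x) ∂μ)
      = (1/100 : ℝ) * ((-1 : ℝ) ^ n * Real.exp 1) + (99/100 : ℝ) * ((2 : ℝ) ^ n * Real.exp (-2)) := by
    intro n
    rw [hμ, integral_add_measure ((integrable_dirac' (hcont n) (-1)).smul_measure ((ENNReal.div_lt_top (by norm_num) (by norm_num)).ne))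
      ((integrable_dirac' (hcont n) 2).smul_measure ((ENNReal.div_lt_top (by norm_num) (by norm_num)).ne)),
      integral_smul_measure, integral_smul_measure, integral_dirac, integral_dirac]
    norm_num
  refine ⟨μ, ?_, ?_, hint, ?_, ?_⟩
  · constructor
    rw [hμ]
    simp only [Measure.add_apply, Measure.smul_apply, MeasureTheory.measure_univ,
      smul_eq_mul, mul_one]
    rw [show ((1:ENNReal)/100) = 1/100 from rfl, ENNReal.div_add_div_same]
    norm_num
    exact ENNReal.div_self (by norm_num) (by norm_num)
  · have h1 : (Measure.dirac (-1 : ℝ)) {x : ℝ | x < 0} = 1 :=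
      Measure.dirac_apply_of_mem (by norm_num)
    calc (0 : ENNReal) < (1/100 : ENNReal) * 1 := by norm_num
    _ ≤ μ {x | x < 0} := by
        rw [hμ, Measure.add_apply, Measure.smul_apply, Measure.smul_apply, h1, smul_eq_mul]
        exact le_add_of_nonneg_right zero_le
  · intro n
    rw [hival n]
    apply div_nonneg _ (by positivity)
    rcases Nat.even_or_odd n with he | ho
    · have : (0:ℝ) ≤ (-1:ℝ)^n := he.pow_nonneg _
      positivity
    · have h1 : ((-1:ℝ))^n = -1 := ho.neg_one_pow
      have h2 : (2:ℝ) ≤ 2 ^ n := by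
        calc (2:ℝ) = 2^1 := by norm_num
        _ ≤ 2^n := by
          apply pow_le_pow_right₀ (by norm_num) ho.pos
      have he1 : Real.exp 1 < 2.7182818286 := Real.exp_one_lt_d9
      have hpos : (0:ℝ) < Real.exp 1 := Real.exp_pos 1
      have hε : (0:ℝ) < Real.exp (-2) := Real.exp_pos _
      have hprod : Real.exp (-2) * Real.exp 1 ^ 2 = 1 := by
        rw [sq, ← Real.exp_add, ← Real.exp_add]; norm_num
      have key2 : Real.exp 1 ≤ 198 * Real.exp (-2) := by
        nlinarith [hpos, hε, he1, hprod, sq_nonneg (Real.exp 1)]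
      rw [h1]
      nlinarith [mul_le_mul_of_nonneg_right h2 hε.le, key2]
  · have s1 : Summable (fun n : ℕ => (-1:ℝ)^n / n.factorial) := Real.summable_pow_div_factorial _
    have s2 : Summable (fun n : ℕ => (2:ℝ)^n / n.factorial) := Real.summable_pow_div_factorial _
    have key : (fun n : ℕ => (∫ x, x ^ n * Real.exp (-x) ∂μ) / n.factorial)
        = fun n : ℕ => (1/100 * Real.exp 1) * ((-1:ℝ)^n / n.factorial)
          + (99/100 * Real.exp (-2)) * ((2:ℝ)^n / n.factorial) := by
      funext n
      rw [hival n]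
      ring
    rw [key, Summable.tsum_add (s1.mul_left _) (s2.mul_left _), tsum_mul_left, tsum_mul_left,
      tsum_pow_div_factorial, tsum_pow_div_factorial]
    rw [show Real.exp (-1) = (Real.exp 1)⁻¹ by rw [← Real.exp_neg], mul_assoc, mul_assoc,
        mul_inv_cancel₀ (Real.exp_ne_zero 1),
        show Real.exp (-2) * Real.exp 2 = 1 by rw [← Real.exp_add]; norm_num]
    norm_num
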